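/- arXiv:1909.10776 — 2 statements merged into one kernel-verified Lean document; each statement's English description precedes it below -/
import Mathlib

section
/- Let λ, μ ∈ ℝ and let H : (Fin 3)⁶ → ℝ be a sixth-order tensor satisfying the symmetries H_{ijklmn} = H_{ikjlmn} = H_{ijklnm} = H_{lmnijk} and positive with constant α > 0, i.e. Σ κ_{ijk} H_{ijklmn} κ_{lmn} ≥ α Σ κ_{ijk}² for every symmetric triadic κ. Let D ⊆ ℝ³ be open, f : ℝ³ → ℝ³, and suppose u : ℝ³ → ℝ³ and ν̃ : ℝ³ → (Fin 3)³ → ℝ are smooth, ν̃(x) is a symmetric triadic for every x, and (u, ν̃) satisfies on D the second-order system: for each k, −(Δ*·u)_k + Σ_{i,j} ∂_i∂_j (H⫶ν̃)_{ijk} = f_k, and for each (i,j,k), −(H⫶∇e(u))_{ijk} + (H⫶ν̃)_{ijk} = 0. Then ν̃ = ∇e(u) on D, and u satisfies on D the fourth-order gradient elasticity equation (Δ*·u)_k − Σ_{i,j} ∂_i∂_j (H⫶∇e(u))_{ijk} = −f_k for each k. -/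
open MeasureTheory

noncomputable section

/-- Points of `ℝ³`. -/
abbrev V : Type := Fin 3 → ℝ

/-- `i`-th partial derivative of a scalar field on `ℝ³`. -/
noncomputable def pd (i : Fin 3) (f : V → ℝ) : V → ℝ :=
  fun x => fderiv ℝ f x (Pi.single i 1)

/-- Divergence of a vector field. -/
noncomputable def divg (u : V → V) : V → ℝ :=
  fun x => ∑ j : Fin 3, pd j (fun y => u y j) x

/-- Componentwise Laplacian of a vector field. -/
noncomputable def vlap (u : V → V) (k : Fin 3) : V → ℝ :=
  fun x => ∑ j : Fin 3, pd j (pd j (fun y => u y k)) x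

/-- The strain tensor `e_{jk}(u) = ½(∂_j u_k + ∂_k u_j)`. -/
noncomputable def strain (u : V → V) (j k : Fin 3) : V → ℝ :=
  fun x => (1/2) * (pd j (fun y => u y k) x + pd k (fun y => u y j) x)

/-- The Lamé (Navier) operator `(Δ*·u)_k = μ (Δu)_k + (λ+μ) ∂_k (div u)`. -/
noncomputable def navier (lam mu : ℝ) (u : V → V) (k : Fin 3) : V → ℝ :=
  fun x => mu * vlap u k x + (lam + mu) * pd k (divg u) x

/-- The gradient of the strain, `(∇e(u))_{ijk} = ∂_i e_{jk}(u)`. -/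
noncomputable def gradStrain (u : V → V) (i j k : Fin 3) : V → ℝ :=
  pd i (strain u j k)

/-- Contraction of a sixth order tensor with a triadic:
`(H⫶κ)_{ijk} = Σ_{l,m,n} H_{ijklmn} κ_{lmn}`. -/
def Hcontr (H : Fin 3 → Fin 3 → Fin 3 → Fin 3 → Fin 3 → Fin 3 → ℝ)
    (κ : Fin 3 → Fin 3 → Fin 3 → ℝ) (i j k : Fin 3) : ℝ :=
  ∑ l : Fin 3, ∑ m : Fin 3, ∑ n : Fin 3, H i j k l m n * κ l m n

/-- A triadic is symmetric if it is symmetric in its last two indices. -/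
def SymTriadic (κ : Fin 3 → Fin 3 → Fin 3 → ℝ) : Prop :=
  ∀ i j k, κ i j k = κ i k j

/-- The symmetries `H_{ijklmn} = H_{ikjlmn} = H_{ijklnm} = H_{lmnijk}`. -/
def Hsym (H : Fin 3 → Fin 3 → Fin 3 → Fin 3 → Fin 3 → Fin 3 → ℝ) : Prop :=
  ∀ i j k l m n, H i j k l m n = H i k j l m n ∧
    H i j k l m n = H i j k l n m ∧ H i j k l m n = H l m n i j k

/-- Positivity of `H` with constant `α` on symmetric triadics. -/
def Hpos (H : Fin 3 → Fin 3 → Fin 3 → Fin 3 → Fin 3 → Fin 3 → ℝ) (α : ℝ) : Prop :=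
  ∀ κ : Fin 3 → Fin 3 → Fin 3 → ℝ, SymTriadic κ →
    α * (∑ i : Fin 3, ∑ j : Fin 3, ∑ k : Fin 3, (κ i j k)^2) ≤
      ∑ i : Fin 3, ∑ j : Fin 3, ∑ k : Fin 3, ∑ l : Fin 3, ∑ m : Fin 3, ∑ n : Fin 3,
        κ i j k * H i j k l m n * κ l m n

/-- The double stress tensor of Mindlin Form II gradient elasticity with constitutive
parameters `a₁,…,a₅`. -/
noncomputable def dstress (a1 a2 a3 a4 a5 : ℝ) (u : V → V) (i j k : Fin 3) : V → ℝ :=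
  fun x =>
    (1/2) * a1 * ((if j = k then (1:ℝ) else 0) * vlap u i x
      + (if i = j then (1:ℝ) else 0) * pd k (divg u) x
      + (if j = k then (1:ℝ) else 0) * pd i (divg u) x
      + (if i = k then (1:ℝ) else 0) * pd j (divg u) x)
    + 2 * a2 * (if j = k then (1:ℝ) else 0) * pd i (divg u) x
    + (1/2) * a3 * ((if i = j then (1:ℝ) else 0) * vlap u k x
      + (if i = j then (1:ℝ) else 0) * pd k (divg u) x
      + (if i = k then (1:ℝ) else 0) * vlap u j x
      + (if i = k then (1:ℝ) else 0) * pd j (divg u) x)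
    + a4 * (pd i (pd j (fun y => u y k)) x + pd i (pd k (fun y => u y j)) x)
    + (1/2) * a5 * (2 * pd j (pd k (fun y => u y i)) x
      + pd i (pd j (fun y => u y k)) x + pd i (pd k (fun y => u y j)) x)

lemma pd_congr_nhds {f g : V → ℝ} {x : V} (h : f =ᶠ[nhds x] g) (i : Fin 3) :
    pd i f x = pd i g x := by
  unfold pd
  rw [Filter.EventuallyEq.fderiv_eq h]

lemma pd_congr_on {D : Set V} (hD : IsOpen D) {f g : V → ℝ}
    (h : ∀ y ∈ D, f y = g y) (i : Fin 3) {x : V} (hx : x ∈ D) :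
    pd i f x = pd i g x := by
  apply pd_congr_nhds _ i
  filter_upwards [hD.mem_nhds hx] with y hy using h y hy

/-- If the smooth pair `(u, ν̃)`, with `ν̃(x)` a symmetric triadic, solves the
second order system on `D` and `H` is symmetric and positive with constant `α > 0`, then
`ν̃ = ∇e(u)` on `D` and `u` solves the fourth order gradient elasticity equation on `D`. -/
theorem second_order_system_implies_fourth_order
    (lam mu : ℝ) (H : Fin 3 → Fin 3 → Fin 3 → Fin 3 → Fin 3 → Fin 3 → ℝ) (hH : Hsym H)
    (α : ℝ) (hα : 0 < α) (hpos : Hpos H α)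
    (D : Set V) (hD : IsOpen D) (f : V → V)
    (u : V → V) (ν : V → Fin 3 → Fin 3 → Fin 3 → ℝ)
    (hu : ContDiff ℝ (⊤ : ℕ∞) u) (hν : ContDiff ℝ (⊤ : ℕ∞) ν)
    (hsym : ∀ x, SymTriadic (ν x))
    (heq1 : ∀ x ∈ D, ∀ k : Fin 3,
      -(navier lam mu u k x)
        + (∑ i : Fin 3, ∑ j : Fin 3, pd i (pd j (fun y => Hcontr H (ν y) i j k)) x)
        = f x k)
    (heq2 : ∀ x ∈ D, ∀ i j k : Fin 3,
      -(Hcontr H (fun l m n => gradStrain u l m n x) i j k) + Hcontr H (ν x) i j k = 0) :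
    (∀ x ∈ D, ∀ i j k : Fin 3, ν x i j k = gradStrain u i j k x) ∧
    (∀ x ∈ D, ∀ k : Fin 3,
      navier lam mu u k x
        - (∑ i : Fin 3, ∑ j : Fin 3,
            pd i (pd j (fun y => Hcontr H (fun l m n => gradStrain u l m n y) i j k)) x)
        = -(f x k)) := by
  
  have hgs : ∀ x, SymTriadic (fun l m n => gradStrain u l m n x) := by
    intro x i j k
    simp only [gradStrain]
    have : strain u j k = strain u k j := by
      funext y; simp only [strain]; ring
    rw [this]
  have part1 : ∀ x ∈ D, ∀ i j k : Fin 3, ν x i j k = gradStrain u i j k x := by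
    intro x hx
    set κ : Fin 3 → Fin 3 → Fin 3 → ℝ :=
      fun i j k => ν x i j k - gradStrain u i j k x with hκ
    have hκsym : SymTriadic κ := by
      intro i j k
      simp only [hκ, hsym x i j k, hgs x i j k]
    have hc0 : ∀ i j k, Hcontr H κ i j k = 0 := by
      intro i j k
      have h2 := heq2 x hx i j k
      simp only [Hcontr, hκ] at h2 ⊢
      simp only [mul_sub, Finset.sum_sub_distrib]
      linarith
    have hquad : (∑ i : Fin 3, ∑ j : Fin 3, ∑ k : Fin 3, ∑ l : Fin 3, ∑ m : Fin 3,
        ∑ n : Fin 3, κ i j k * H i j k l m n * κ l m n) = 0 := by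
      have : ∀ i j k : Fin 3, (∑ l : Fin 3, ∑ m : Fin 3, ∑ n : Fin 3,
          κ i j k * H i j k l m n * κ l m n) = 0 := by
        intro i j k
        have := hc0 i j k
        simp only [Hcontr] at this
        calc (∑ l : Fin 3, ∑ m : Fin 3, ∑ n : Fin 3, κ i j k * H i j k l m n * κ l m n)
            = κ i j k * ∑ l : Fin 3, ∑ m : Fin 3, ∑ n : Fin 3, H i j k l m n * κ l m n := by
              simp [Finset.mul_sum, mul_assoc]
          _ = 0 := by rw [this]; ring
      simp [this]
    have hsq : (∑ i : Fin 3, ∑ j : Fin 3, ∑ k : Fin 3, (κ i j k)^2) = 0 := by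
      have hle := hpos κ hκsym
      rw [hquad] at hle
      have hnn : (0:ℝ) ≤ ∑ i : Fin 3, ∑ j : Fin 3, ∑ k : Fin 3, (κ i j k)^2 := by
        positivity
      nlinarith
    intro i j k
    have h1 : ∀ i j k : Fin 3, (κ i j k)^2 = 0 := by
      intro i j k
      have := (Finset.sum_eq_zero_iff_of_nonneg (by intro a _; positivity)).mp hsq i
        (Finset.mem_univ i)
      have := (Finset.sum_eq_zero_iff_of_nonneg (by intro a _; positivity)).mp this j
        (Finset.mem_univ j)
      exact (Finset.sum_eq_zero_iff_of_nonneg (by intro a _; positivity)).mp this k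
        (Finset.mem_univ k)
    have := pow_eq_zero_iff (n := 2) (by norm_num) |>.mp (h1 i j k)
    simp only [hκ] at this
    linarith
  refine ⟨part1, ?_⟩
  intro x hx k
  have hrepl : ∀ i j : Fin 3,
      pd i (pd j (fun y => Hcontr H (ν y) i j k)) x
        = pd i (pd j (fun y => Hcontr H (fun l m n => gradStrain u l m n y) i j k)) x := by
    intro i j
    apply pd_congr_on hD _ i hx
    intro y hy
    apply pd_congr_on hD _ j hy
    intro z hz
    simp only [Hcontr]
    apply Finset.sum_congr rfl; intro l _
    apply Finset.sum_congr rfl; intro m _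
    apply Finset.sum_congr rfl; intro n _
    rw [part1 z hz l m n]
  have h1 := heq1 x hx k
  have : (∑ i : Fin 3, ∑ j : Fin 3, pd i (pd j (fun y => Hcontr H (ν y) i j k)) x)
      = ∑ i : Fin 3, ∑ j : Fin 3,
          pd i (pd j (fun y => Hcontr H (fun l m n => gradStrain u l m n y) i j k)) x := by
    exact Finset.sum_congr rfl fun i _ => Finset.sum_congr rfl fun j _ => hrepl i j
  rw [this] at h1
  linarith
end
end

section
/- Let μ > 0, λ ≥ 0, and let H : (Fin 3)⁶ → ℝ be a sixth-order tensor satisfying the symmetries H_{ijklmn} = H_{ikjlmn} = H_{ijklnm} = H_{lmnijk} and positive with constant α > 0 on symmetric triadics. Suppose z : ℝ³ → ℝ³ and χ̃ : ℝ³ → (Fin 3)³ → ℝ are smooth, compactly supported, χ̃(x) is a symmetric triadic for every x, and the pair (z, χ̃) satisfies on all of ℝ³ the homogeneous second-order system: for each k, −(Δ*·z)_k + Σ_{i,j} ∂_i∂_j (H⫶χ̃)_{ijk} = 0, and for each (i,j,k), −(H⫶∇e(z))_{ijk} + (H⫶χ̃)_{ijk} = 0. Then z ≡ 0 and χ̃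 ≡ 0. -/
open MeasureTheory

noncomputable section

/-!
Eliminating `χ̃` with the second equation turns the first into the fourth-order equation
`Δ*·z = Σᵢⱼ ∂ᵢ∂ⱼ (H⫶∇e(z))ᵢⱼ·` for `z` alone. Testing it against `z` and integrating by parts
(compact support kills the boundary terms) gives
`-μ ‖∇z‖² - (λ+μ) ‖div z‖² = ∫ ∇e(z) ⫶ H ⫶ ∇e(z) ≥ 0`:
since `H⫶∇e(z)` is symmetric in its last two indices, only the symmetric part `∇e(z)` of `∇∇z`
pairs with it, and `H` is positive on symmetric triadics. Hence `∇z = 0`, so `z = 0` by compact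
support, and then `H⫶χ̃ = H⫶∇e(z) = 0` forces `χ̃ = 0` by positivity again.
-/

open scoped ContDiff

theorem HasCompactSupport.apply {α ι : Type*} [TopologicalSpace α] {M : ι → Type*}
    [∀ i, Zero (M i)] {f : α → ∀ i, M i} (hf : HasCompactSupport f) (i : ι) :
    HasCompactSupport fun x => f x i :=
  hf.comp_left (g := fun v : ∀ j, M j => v i) rfl

theorem Continuous.integrable_mul_of_hasCompactSupport_left {X : Type*} [MeasurableSpace X]
    [TopologicalSpace X] [OpensMeasurableSpace X] {μ : Measure X} [IsFiniteMeasureOnCompacts μ]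
    {f g : X → ℝ} (hf : Continuous f) (hg : Continuous g) (hfc : HasCompactSupport f) :
    Integrable (fun x => f x * g x) μ :=
  (hf.mul hg).integrable_of_hasCompactSupport hfc.mul_right

section PartialDerivatives

variable {f g : V → ℝ}

theorem ContDiff.pd (hf : ContDiff ℝ ∞ f) (i : Fin 3) : ContDiff ℝ ∞ (pd i f) :=
  (hf.fderiv_right le_rfl).clm_apply contDiff_const

theorem HasCompactSupport.pd (hf : HasCompactSupport f) (i : Fin 3) :
    HasCompactSupport (pd i f) :=
  hf.fderiv (𝕜 := ℝ) |>.comp_left (g := fun L : V →L[ℝ] ℝ => L (Pi.single i 1)) rfl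

theorem pd_const (i : Fin 3) (c : ℝ) : pd i (fun _ => c) = fun _ => 0 :=
  funext fun _ => by simp [pd]

theorem pd_pd_comm (hf : ContDiff ℝ ∞ f) (i j : Fin 3) (x : V) :
    pd i (pd j f) x = pd j (pd i f) x := by
  have hsymm : IsSymmSndFDerivAt ℝ f x :=
    hf.contDiffAt.isSymmSndFDerivAt
      (by rw [minSmoothness_of_isRCLikeNormedField]; exact WithTop.coe_le_coe.mpr le_top)
  have hd : DifferentiableAt ℝ (fderiv ℝ f) x :=
    (hf.fderiv_right (m := ∞) le_rfl).differentiable (by simp) x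
  have hpd : ∀ a b, pd a (pd b f) x = fderiv ℝ (fderiv ℝ f) x (Pi.single a 1) (Pi.single b 1) :=
    fun a b => by
      change fderiv ℝ (fun y => fderiv ℝ f y (Pi.single b 1)) x (Pi.single a 1) = _
      simp [fderiv_clm_apply hd (differentiableAt_const _)]
  rw [hpd, hpd, hsymm]

theorem integral_mul_pd_eq_neg (hf : ContDiff ℝ ∞ f) (hg : ContDiff ℝ ∞ g)
    (hfc : HasCompactSupport f) (i : Fin 3) : ∫ x, f x * pd i g x = -∫ x, pd i f x * g x :=
  integral_mul_fderiv_eq_neg_fderiv_mul_of_integrable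
    ((hf.pd i).continuous.integrable_mul_of_hasCompactSupport_left hg.continuous (hfc.pd i))
    (hf.continuous.integrable_mul_of_hasCompactSupport_left (hg.pd i).continuous hfc)
    (hf.continuous.integrable_mul_of_hasCompactSupport_left hg.continuous hfc)
    (fun x _ => hf.differentiable (by simp) x) (fun x _ => hg.differentiable (by simp) x)

theorem eq_zero_of_pd_eq_zero (hf : Differentiable ℝ f) (hfc : HasCompactSupport f)
    (h : ∀ i x, pd i f x = 0) : f = 0 := by
  have hfd : ∀ x, fderiv ℝ f x = 0 := fun x =>
    ContinuousLinearMap.coe_injective (LinearMap.pi_ext fun i t => by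
      have hi : fderiv ℝ f x (Pi.single i 1) = 0 := h i x
      simpa [← Pi.single_smul', hi] using (fderiv ℝ f x).map_smul t (Pi.single i 1))
  obtain ⟨y, hy⟩ := Set.ne_univ_iff_exists_notMem _ |>.mp hfc.ne_univ
  funext x
  rw [is_const_of_fderiv_eq_zero hf hfd x y, image_eq_zero_of_notMem_tsupport hy, Pi.zero_apply]

theorem integral_sum_mul_pd_eq_neg {ι : Type*} [Fintype ι] (i : ι → Fin 3) {f g : ι → V → ℝ}
    (hf : ∀ a, ContDiff ℝ ∞ (f a)) (hg : ∀ a, ContDiff ℝ ∞ (g a))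
    (hfc : ∀ a, HasCompactSupport (f a)) :
    ∫ x, ∑ a, f a x * pd (i a) (g a) x = -∫ x, ∑ a, pd (i a) (f a) x * g a x := by
  rw [integral_finsetSum _ fun a _ => (hf a).continuous.integrable_mul_of_hasCompactSupport_left
      ((hg a).pd (i a)).continuous (hfc a),
    integral_finsetSum _ fun a _ =>
      ((hf a).pd (i a)).continuous.integrable_mul_of_hasCompactSupport_left (hg a).continuous
        ((hfc a).pd (i a)),
    ← Finset.sum_neg_distrib]
  exact Finset.sum_congr rfl fun a _ => integral_mul_pd_eq_neg (hf a) (hg a) (hfc a) (i a)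

end PartialDerivatives

section Elasticity

variable {z : V → V}

theorem gradStrain_eq (hz : ContDiff ℝ ∞ z) (i j k : Fin 3) (x : V) :
    gradStrain z i j k x =
      1 / 2 * (pd i (pd j fun y => z y k) x + pd i (pd k fun y => z y j) x) := by
  have hd : ∀ a b, Differentiable ℝ (pd a fun y => z y b) := fun a b =>
    ((contDiff_pi.mp hz b).pd a).differentiable (by simp)
  change fderiv ℝ (fun y => 1 / 2 * (pd j _ y + pd k _ y)) x _ = _
  rw [fderiv_const_mul (a := fun y => pd j _ y + pd k _ y) ((hd j k).add (hd k j) x),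
    fderiv_fun_add (hd j k x) (hd k j x)]
  rfl

theorem symTriadic_gradStrain (z : V → V) (x : V) :
    SymTriadic fun i j k => gradStrain z i j k x := by
  intro i j k
  have hstrain : strain z j k = strain z k j := funext fun y => by simp only [strain, add_comm]
  simp only [gradStrain, hstrain]

theorem contDiff_gradStrain (hz : ContDiff ℝ ∞ z) (i j k : Fin 3) :
    ContDiff ℝ ∞ (gradStrain z i j k) :=
  (contDiff_const.mul ((((contDiff_pi.mp hz) k).pd j).add (((contDiff_pi.mp hz) j).pd k))).pd i

theorem integral_mul_navier (lam mu : ℝ) (hz : ContDiff ℝ ∞ z) (hzc : HasCompactSupport z) :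
    ∫ x, ∑ k, z x k * navier lam mu z k x =
      -(mu * (∑ k, ∑ j, ∫ x, pd j (fun y => z y k) x ^ 2) + (lam + mu) * ∫ x, divg z x ^ 2) := by
  have hzk : ∀ k, ContDiff ℝ ∞ fun y => z y k := contDiff_pi.mp hz
  have hzkc : ∀ k, HasCompactSupport fun y => z y k := hzc.apply
  have hdiv : ContDiff ℝ ∞ (divg z) := ContDiff.sum fun j _ => (hzk j).pd j
  have hint : ∀ g : Fin 3 → V → ℝ, (∀ k, Continuous (g k)) →
      Integrable fun x => ∑ k, z x k * g k x := fun g hg =>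
    integrable_finsetSum _ fun k _ =>
      (hzk k).continuous.integrable_mul_of_hasCompactSupport_left (hg k) (hzkc k)
  have hdd : ∀ k j, ContDiff ℝ ∞ (pd j (pd j fun y => z y k)) := fun k j => ((hzk k).pd j).pd j
  have hvlap : ∀ k, Continuous (vlap z k) := fun k =>
    continuous_finsetSum _ fun j _ => (hdd k j).continuous
  have hpd_div : ∀ k, Continuous (pd k (divg z)) := fun k => (hdiv.pd k).continuous
  have hlap : ∫ x, ∑ k, z x k * vlap z k x = -∑ k, ∑ j, ∫ x, pd j (fun y => z y k) x ^ 2 := by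
    rw [integral_finsetSum _ fun k _ =>
      (hzk k).continuous.integrable_mul_of_hasCompactSupport_left (hvlap k) (hzkc k),
      ← Finset.sum_neg_distrib]
    refine Finset.sum_congr rfl fun k _ => ?_
    simp only [vlap, Finset.mul_sum]
    rw [integral_finsetSum _ fun j _ =>
      (hzk k).continuous.integrable_mul_of_hasCompactSupport_left (hdd k j).continuous (hzkc k),
      ← Finset.sum_neg_distrib]
    refine Finset.sum_congr rfl fun j _ => ?_
    simp only [integral_mul_pd_eq_neg (hzk k) ((hzk k).pd j) (hzkc k) j, sq]
  have hgraddiv : ∫ x, ∑ k, z x k * pd k (divg z) x = -∫ x, divg z x ^ 2 := by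
    refine (integral_sum_mul_pd_eq_neg (fun k => k) hzk (fun _ => hdiv) hzkc).trans ?_
    simp only [← Finset.sum_mul, sq, divg]
  calc ∫ x, ∑ k, z x k * navier lam mu z k x
      = ∫ x, (mu * ∑ k, z x k * vlap z k x + (lam + mu) * ∑ k, z x k * pd k (divg z) x) := by
        congr 1
        funext x
        simp only [navier, mul_add, Finset.mul_sum, Finset.sum_add_distrib, mul_left_comm]
    _ = mu * (∫ x, ∑ k, z x k * vlap z k x)
          + (lam + mu) * ∫ x, ∑ k, z x k * pd k (divg z) x := by
        rw [integral_add ((hint _ hvlap).const_mul mu) ((hint _ hpd_div).const_mul _),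
          integral_const_mul, integral_const_mul]
    _ = _ := by rw [hlap, hgraddiv]; ring

theorem eq_zero_of_integral_mul_navier_nonneg {lam mu : ℝ} (hmu : 0 < mu) (hlm : 0 ≤ lam + mu)
    (hz : ContDiff ℝ ∞ z) (hzc : HasCompactSupport z)
    (h : 0 ≤ ∫ x, ∑ k, z x k * navier lam mu z k x) : z = 0 := by
  have hzk : ∀ k, ContDiff ℝ ∞ fun y => z y k := contDiff_pi.mp hz
  have hzkc : ∀ k, HasCompactSupport fun y => z y k := hzc.apply
  have hnonneg : ∀ k j, 0 ≤ ∫ x, pd j (fun y => z y k) x ^ 2 := fun k j =>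
    integral_nonneg fun x => sq_nonneg _
  have hsum : ∑ k, ∑ j, ∫ x, pd j (fun y => z y k) x ^ 2 = 0 := by
    rw [integral_mul_navier lam mu hz hzc] at h
    have hgrad_nonneg : 0 ≤ ∑ k, ∑ j, ∫ x, pd j (fun y => z y k) x ^ 2 :=
      Finset.sum_nonneg fun k _ => Finset.sum_nonneg fun j _ => hnonneg k j
    have hdiv_nonneg : 0 ≤ ∫ x, divg z x ^ 2 := integral_nonneg fun x => sq_nonneg _
    nlinarith [mul_nonneg hlm hdiv_nonneg]
  have hgrad : ∀ k j x, pd j (fun y => z y k) x = 0 := by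
    intro k j x
    by_contra hx
    have hsupp : HasCompactSupport fun y => pd j (fun y => z y k) y ^ 2 :=
      ((hzkc k).pd j).comp_left (g := fun t : ℝ => t ^ 2) (by norm_num)
    have hpos : 0 < ∫ y, pd j (fun y => z y k) y ^ 2 :=
      (((hzk k).pd j).continuous.pow 2).integral_pos_of_hasCompactSupport_nonneg_nonzero
        hsupp (fun y => sq_nonneg _) (pow_ne_zero 2 hx)
    have hk := (Finset.sum_eq_zero_iff_of_nonneg fun k _ => Finset.sum_nonneg fun j _ =>
      hnonneg k j).mp hsum k (Finset.mem_univ k)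
    exact hpos.ne' <|
      (Finset.sum_eq_zero_iff_of_nonneg fun j _ => hnonneg k j).mp hk j (Finset.mem_univ j)
  funext x k
  exact congrFun (eq_zero_of_pd_eq_zero ((hzk k).differentiable (by simp)) (hzkc k) (hgrad k)) x

theorem integral_mul_sum_pd_pd (hz : ContDiff ℝ ∞ z) (hzc : HasCompactSupport z)
    {T : Fin 3 → Fin 3 → Fin 3 → V → ℝ} (hT : ∀ i j k, ContDiff ℝ ∞ (T i j k)) :
    ∫ x, ∑ k, z x k * ∑ i, ∑ j, pd i (pd j (T i j k)) x =
      ∫ x, ∑ k, ∑ i, ∑ j, pd i (pd j fun y => z y k) x * T i j k x := by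
  have hzk : ∀ k, ContDiff ℝ ∞ fun y => z y k := contDiff_pi.mp hz
  have hzkc : ∀ k, HasCompactSupport fun y => z y k := hzc.apply
  calc _ = ∫ x, ∑ a : Fin 3 × Fin 3 × Fin 3,
        z x a.1 * pd a.2.1 (pd a.2.2 (T a.2.1 a.2.2 a.1)) x := by
        simp only [Fintype.sum_prod_type, Finset.mul_sum]
    _ = ∫ x, ∑ a : Fin 3 × Fin 3 × Fin 3,
        pd a.2.2 (pd a.2.1 fun y => z y a.1) x * T a.2.1 a.2.2 a.1 x := by
        rw [integral_sum_mul_pd_eq_neg (fun a : Fin 3 × Fin 3 × Fin 3 => a.2.1)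
            (f := fun a y => z y a.1) (g := fun a => pd a.2.2 (T a.2.1 a.2.2 a.1))
            (fun a => hzk a.1) (fun a => (hT _ _ _).pd _) (fun a => hzkc a.1),
          integral_sum_mul_pd_eq_neg (fun a : Fin 3 × Fin 3 × Fin 3 => a.2.2)
            (fun a => (hzk a.1).pd a.2.1) (fun a => hT _ _ _)
            (fun a => (hzkc a.1).pd a.2.1), neg_neg]
    _ = _ := by
        congr 1
        funext x
        simp only [Fintype.sum_prod_type]
        exact Finset.sum_congr rfl fun k _ => Finset.sum_congr rfl fun i _ =>
          Finset.sum_congr rfl fun j _ => by rw [pd_pd_comm (hzk k)]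

theorem sum_pd_pd_mul_eq_sum_gradStrain_mul (hz : ContDiff ℝ ∞ z)
    {T : Fin 3 → Fin 3 → Fin 3 → ℝ} (hT : ∀ i j k, T i j k = T i k j) (x : V) :
    ∑ k, ∑ i, ∑ j, pd i (pd j fun y => z y k) x * T i j k =
      ∑ i, ∑ j, ∑ k, gradStrain z i j k x * T i j k := by
  have hswap : ∑ i, ∑ j, ∑ k, pd i (pd k fun y => z y j) x * T i j k =
      ∑ i, ∑ j, ∑ k, pd i (pd j fun y => z y k) x * T i j k :=
    Finset.sum_congr rfl fun i _ => by
      rw [Finset.sum_comm]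
      exact Finset.sum_congr rfl fun j _ => Finset.sum_congr rfl fun k _ => by rw [hT i k j]
  calc _ = ∑ i, ∑ j, ∑ k, pd i (pd j fun y => z y k) x * T i j k := by
        rw [Finset.sum_comm]
        exact Finset.sum_congr rfl fun i _ => Finset.sum_comm
    _ = 1 / 2 * (∑ i, ∑ j, ∑ k, pd i (pd j fun y => z y k) x * T i j k)
        + 1 / 2 * ∑ i, ∑ j, ∑ k, pd i (pd k fun y => z y j) x * T i j k := by
        rw [hswap]; ring
    _ = _ := by
        simp only [gradStrain_eq hz, Finset.mul_sum, ← Finset.sum_add_distrib]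
        exact Finset.sum_congr rfl fun i _ => Finset.sum_congr rfl fun j _ =>
          Finset.sum_congr rfl fun k _ => by ring

end Elasticity

section SixthOrderTensors

variable {H : Fin 3 → Fin 3 → Fin 3 → Fin 3 → Fin 3 → Fin 3 → ℝ} {κ : Fin 3 → Fin 3 → Fin 3 → ℝ}

theorem sum_mul_Hcontr :
    ∑ i, ∑ j, ∑ k, κ i j k * Hcontr H κ i j k =
      ∑ i, ∑ j, ∑ k, ∑ l, ∑ m, ∑ n, κ i j k * H i j k l m n * κ l m n := by
  simp only [Hcontr, Finset.mul_sum, mul_assoc]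

theorem Hcontr_comm (hH : ∀ i j k l m n, H i j k l m n = H i k j l m n) (i j k : Fin 3) :
    Hcontr H κ i j k = Hcontr H κ i k j := by
  simp only [Hcontr, hH i j k]

theorem contDiff_Hcontr {κ : V → Fin 3 → Fin 3 → Fin 3 → ℝ}
    (hκ : ∀ l m n, ContDiff ℝ ∞ fun y => κ y l m n) (i j k : Fin 3) :
    ContDiff ℝ ∞ fun y => Hcontr H (κ y) i j k :=
  ContDiff.sum fun l _ => ContDiff.sum fun m _ => ContDiff.sum fun n _ =>
    contDiff_const.mul (hκ l m n)

theorem Hpos.sum_mul_Hcontr_nonneg {α : ℝ} (hpos : Hpos H α) (hα : 0 ≤ α) (hκ : SymTriadic κ) :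
    0 ≤ ∑ i, ∑ j, ∑ k, κ i j k * Hcontr H κ i j k := by
  rw [sum_mul_Hcontr]
  exact (mul_nonneg hα (by positivity)).trans (hpos κ hκ)

theorem Hpos.eq_zero_of_Hcontr_eq_zero {α : ℝ} (hpos : Hpos H α) (hα : 0 < α)
    (hκ : SymTriadic κ) (h : ∀ i j k, Hcontr H κ i j k = 0) (i j k : Fin 3) : κ i j k = 0 := by
  have hquad := hpos κ hκ
  simp only [← sum_mul_Hcontr, h, mul_zero, Finset.sum_const_zero] at hquad
  have hsq : ∑ i, ∑ j, ∑ k, κ i j k ^ 2 = 0 :=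
    le_antisymm (nonpos_of_mul_nonpos_right hquad hα) (by positivity)
  have hi := (Finset.sum_eq_zero_iff_of_nonneg fun i _ => by positivity).mp hsq i
    (Finset.mem_univ i)
  have hij := (Finset.sum_eq_zero_iff_of_nonneg fun j _ => by positivity).mp hi j
    (Finset.mem_univ j)
  exact pow_eq_zero_iff two_ne_zero |>.mp <|
    (Finset.sum_eq_zero_iff_of_nonneg fun k _ => by positivity).mp hij k (Finset.mem_univ k)

end SixthOrderTensors

theorem homogeneous_second_order_system_trivial_general
    (lam mu : ℝ) (hmu : 0 < mu) (hlam : 0 ≤ lam)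
    (H : Fin 3 → Fin 3 → Fin 3 → Fin 3 → Fin 3 → Fin 3 → ℝ) (hH : Hsym H)
    (α : ℝ) (hα : 0 < α) (hpos : Hpos H α)
    (z : V → V) (χ : V → Fin 3 → Fin 3 → Fin 3 → ℝ)
    (hz : ContDiff ℝ (⊤ : ℕ∞) z)
    (hzc : HasCompactSupport z)
    (hsym : ∀ x, SymTriadic (χ x))
    (heq1 : ∀ x : V, ∀ k : Fin 3,
      -(navier lam mu z k x)
        + (∑ i : Fin 3, ∑ j : Fin 3, pd i (pd j (fun y => Hcontr H (χ y) i j k)) x) = 0)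
    (heq2 : ∀ x : V, ∀ i j k : Fin 3,
      -(Hcontr H (fun l m n => gradStrain z l m n x) i j k) + Hcontr H (χ x) i j k = 0) :
    (∀ x, z x = 0) ∧ (∀ x, ∀ i j k : Fin 3, χ x i j k = 0) := by
  have hHχ : ∀ x i j k,
      Hcontr H (χ x) i j k = Hcontr H (fun l m n => gradStrain z l m n x) i j k :=
    fun x i j k => by linarith [heq2 x i j k]
  have hnavier : ∀ x k, navier lam mu z k x = ∑ i, ∑ j,
      pd i (pd j fun y => Hcontr H (fun l m n => gradStrain z l m n y) i j k) x := by
    intro x k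
    have h := heq1 x k
    simp only [hHχ] at h
    linarith
  have hz0 : z = 0 := by
    refine eq_zero_of_integral_mul_navier_nonneg (lam := lam) hmu (by linarith) hz hzc ?_
    simp only [hnavier]
    rw [integral_mul_sum_pd_pd hz hzc (contDiff_Hcontr (contDiff_gradStrain hz))]
    refine integral_nonneg fun x => ?_
    rw [sum_pd_pd_mul_eq_sum_gradStrain_mul hz (Hcontr_comm fun i j k l m n => (hH i j k l m n).1)]
    exact hpos.sum_mul_Hcontr_nonneg hα.le (symTriadic_gradStrain z x)
  subst hz0
  refine ⟨fun x => rfl, fun x => hpos.eq_zero_of_Hcontr_eq_zero hα (hsym x) fun i j k => ?_⟩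
  rw [hHχ]
  simp [Hcontr, gradStrain_eq hz, pd_const]

/-- uniqueness for the homogeneous second order system among smooth compactly
supported fields. -/
theorem homogeneous_second_order_system_trivial
    (lam mu : ℝ) (hmu : 0 < mu) (hlam : 0 ≤ lam)
    (H : Fin 3 → Fin 3 → Fin 3 → Fin 3 → Fin 3 → Fin 3 → ℝ) (hH : Hsym H)
    (α : ℝ) (hα : 0 < α) (hpos : Hpos H α)
    (z : V → V) (χ : V → Fin 3 → Fin 3 → Fin 3 → ℝ)
    (hz : ContDiff ℝ (⊤ : ℕ∞) z) (hχ : ContDiff ℝ (⊤ : ℕ∞) χ)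
    (hzc : HasCompactSupport z) (hχc : HasCompactSupport χ)
    (hsym : ∀ x, SymTriadic (χ x))
    (heq1 : ∀ x : V, ∀ k : Fin 3,
      -(navier lam mu z k x)
        + (∑ i : Fin 3, ∑ j : Fin 3, pd i (pd j (fun y => Hcontr H (χ y) i j k)) x) = 0)
    (heq2 : ∀ x : V, ∀ i j k : Fin 3,
      -(Hcontr H (fun l m n => gradStrain z l m n x) i j k) + Hcontr H (χ x) i j k = 0) :
    (∀ x, z x = 0) ∧ (∀ x, ∀ i j k : Fin 3, χ x i j k = 0) :=
  homogeneous_second_order_system_trivial_general lam mu hmu hlam H hH α hα hpos z χ hz hzc hsym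
    heq1 heq2
end
end
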